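/- arXiv:math/0402454 — 2 statements merged into one kernel-verified Lean document; each statement's English description precedes it below -/
import Mathlib

section
/- There exists a finite set S ⊂ ℂ containing 0 such that for every λ ∉ S, every (a,b,c,p) ∈ ℂ⁴ with c ≠ 0 satisfying λp² = −2a, λ²b = 4ac, 12ca³ = (2c³+1)λ, and 64c⁶ − (16λ⁶ − 32)c³ + λ⁶ = 0, every g ∈ G, and every σ ∈ H: if g·(σ·W(a,b,c,p)) = W(a,b,c,p), then g·W(a,b,c,p) = W(a,b,c,p) and σ·W(a,b,c,p) = W(a,b,c,p). -/
noncomputable section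

/-- The first cubic form defining the (3,3) pencil `X_λ`. -/
def Fcubic (l : ℂ) (x : Fin 6 → ℂ) : ℂ :=
  x 0 ^ 3 + x 1 ^ 3 + x 2 ^ 3 - 3 * l * x 3 * x 4 * x 5

/-- The second cubic form defining the (3,3) pencil `X_λ`. -/
def Gcubic (l : ℂ) (x : Fin 6 → ℂ) : ℂ :=
  x 3 ^ 3 + x 4 ^ 3 + x 5 ^ 3 - 3 * l * x 0 * x 1 * x 2

/-- The plane `W(a,b,c,p) ⊆ ℂ⁶`, spanned by `(1,−1,0,p,−p,0)` and `(a,a,b,c,c,1)`. -/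
def linePlane (a b c p : ℂ) : Submodule ℂ (Fin 6 → ℂ) :=
  Submodule.span ℂ {![1, -1, 0, p, -p, 0], ![a, a, b, c, c, 1]}

/-- The system of equations characterizing the 36 lines of Lemma 2.3. -/
def lineEqs (l a b c p : ℂ) : Prop :=
  l * p ^ 2 = -2 * a ∧ l ^ 2 * b = 4 * a * c ∧
    12 * c * a ^ 3 = (2 * c ^ 3 + 1) * l ∧
    64 * c ^ 6 - (16 * l ^ 6 - 32) * c ^ 3 + l ^ 6 = 0

/-- The subgroup `G ≤ (ℂˣ)⁶` generated by `α₁, α₂, α₃`, where `ω = ζ³`. -/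
def Gsub (z : ℂˣ) : Subgroup (Fin 6 → ℂˣ) :=
  Subgroup.closure
    {![1, z ^ 3, (z ^ 3)⁻¹, 1, 1, 1],
      ![1, 1, z ^ 3, z, z, (z ^ 2)⁻¹],
      ![1, 1, 1, 1, z ^ 3, (z ^ 3)⁻¹]}

/-- The subgroup `H ≤ S₆` generated by all permutations of the indices `{0,1,2}`
and all permutations of the indices `{3,4,5}`. -/
def Hsub : Subgroup (Equiv.Perm (Fin 6)) :=
  Subgroup.closure
    ({σ : Equiv.Perm (Fin 6) | ∀ i : Fin 6, 3 ≤ (i : ℕ) → σ i = i} ∪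
      {σ : Equiv.Perm (Fin 6) | ∀ i : Fin 6, (i : ℕ) < 3 → σ i = i})

/-- Componentwise multiplication by `g ∈ (ℂˣ)⁶` as a linear automorphism-inducing map. -/
def diagMap (g : Fin 6 → ℂˣ) : (Fin 6 → ℂ) →ₗ[ℂ] (Fin 6 → ℂ) :=
  LinearMap.pi fun i => (g i : ℂ) • LinearMap.proj i

/-- Coordinate permutation `x ↦ x ∘ σ` as a linear map. -/
def permMap (σ : Equiv.Perm (Fin 6)) : (Fin 6 → ℂ) →ₗ[ℂ] (Fin 6 → ℂ) :=
  LinearMap.funLeft ℂ ℂ σ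

/-!
Take `S = {0} ∪ μ₆`. For `λ ∉ S` the equations force `p ≠ 0`, `b ≠ 0` and `(ap)² ≠ c²`.
Write `g • σ • u = s u + t v`, where `u, v` are the spanning vectors of `W`.
Elements of `H` preserve the blocks `{0,1,2}` and `{3,4,5}`,
so on each block `σ • u` is a permutation of `(1, -1, 0)` resp. `(p, -p, 0)`: its sum, sum of
squares and product are those of `u`. The vanishing block products force `t = 0`, as otherwise
`(ap)² = c²`. Comparing coordinates of `g • σ • u = s u` with the relations
`g₀ = 1`, `g₁g₂ = g₃³`, `g₃g₄g₅ = 1`, `g₃⁹ = 1` valid on `G` then gives `g = 1`,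
and both conclusions are immediate.
-/

open MulAction Equiv
open scoped Pointwise

@[simp]
lemma diagMap_apply (g : Fin 6 → ℂˣ) (x : Fin 6 → ℂ) (i : Fin 6) : diagMap g x i = g i * x i :=
  rfl

@[simp]
lemma permMap_apply (σ : Perm (Fin 6)) (x : Fin 6 → ℂ) (i : Fin 6) : permMap σ x i = x (σ i) :=
  rfl

lemma diagMap_one : diagMap 1 = LinearMap.id := by
  ext x i
  simp

lemma coe_relations_of_mem_Gsub {z : ℂˣ} (hz : z ^ 9 = 1) {g : Fin 6 → ℂˣ} (hg : g ∈ Gsub z) :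
    (g 0 : ℂ) = 1 ∧ (g 3 : ℂ) ^ 9 = 1 ∧ (g 1 : ℂ) * g 2 = g 3 ^ 3 ∧ (g 3 : ℂ) * g 4 * g 5 = 1 := by
  simp only [← Units.val_pow_eq_pow_val, ← Units.val_mul, Units.val_eq_one, Units.val_inj]
  have key (φ : (Fin 6 → ℂˣ) →* ℂˣ) (hφ : Gsub z ≤ φ.ker) : φ g = 1 := hφ hg
  let ev (i : Fin 6) := Pi.evalMonoidHom (fun _ => ℂˣ) i
  refine ⟨key (ev 0) ?_, key ((powMonoidHom 9).comp (ev 3)) ?_,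
    mul_inv_eq_one.1 (key (ev 1 * ev 2 * ((powMonoidHom 3).comp (ev 3))⁻¹) ?_),
    key (ev 3 * ev 4 * ev 5) ?_⟩
  all_goals
    rw [Gsub, Subgroup.closure_le]
    simp [Set.insert_subset_iff, ev, hz, ← sq]

abbrev lowBlock : Finset (Fin 6) := {0, 1, 2}

lemma Hsub_le_stabilizer_lowBlock :
    Hsub ≤ stabilizer (Perm (Fin 6)) (lowBlock : Set (Fin 6)) := by
  have mem_lowBlock : ∀ i : Fin 6, i ∈ lowBlock ↔ (i : ℕ) < 3 := by decide
  rw [Hsub, Subgroup.closure_le]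
  rintro σ (hσ | hσ)
  · rw [SetLike.mem_coe, ← stabilizer_compl]
    refine fixingSubgroup_le_stabilizer _ _ ((mem_fixingSubgroup_iff _).2 fun i hi => hσ i ?_)
    rw [Set.mem_compl_iff, Finset.mem_coe, mem_lowBlock] at hi
    omega
  · exact fixingSubgroup_le_stabilizer _ _
      ((mem_fixingSubgroup_iff _).2 fun i hi => hσ i ((mem_lowBlock i).1 hi))

@[to_additive]
lemma Finset.prod_comp_perm_of_mem_stabilizer {ι M : Type*} [CommMonoid M] {σ : Perm ι}
    {s : Finset ι} (hσ : σ ∈ stabilizer (Perm ι) (s : Set ι)) (x : ι → M) :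
    ∏ i ∈ s, x (σ i) = ∏ i ∈ s, x i :=
  Finset.prod_equiv σ (fun i => by simpa using ((mem_stabilizer_set.1 hσ) i).symm)
    (fun _ _ => rfl)

@[to_additive]
lemma block_prod_comp_perm {M : Type*} [CommMonoid M] {σ : Perm (Fin 6)}
    (hσ : σ ∈ stabilizer (Perm (Fin 6)) (lowBlock : Set (Fin 6))) (f : Fin 6 → M) :
    f (σ 0) * f (σ 1) * f (σ 2) = f 0 * f 1 * f 2 ∧
      f (σ 3) * f (σ 4) * f (σ 5) = f 3 * f 4 * f 5 := by
  have hσc : σ ∈ stabilizer (Perm (Fin 6)) ((lowBlockᶜ : Finset (Fin 6)) : Set (Fin 6)) := by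
    rwa [Finset.coe_compl, stabilizer_compl]
  have h₁ := Finset.prod_comp_perm_of_mem_stabilizer hσ f
  have h₂ := Finset.prod_comp_perm_of_mem_stabilizer hσc f
  rw [show (lowBlockᶜ : Finset (Fin 6)) = {3, 4, 5} by decide] at h₂
  simpa [mul_assoc] using And.intro h₁ h₂

section Algebra

variable {l a b c p : ℂ}

lemma lineEqs_nondegenerate (hl : l ≠ 0) (hl6 : l ^ 6 ≠ 1) (hc : c ≠ 0)
    (h : lineEqs l a b c p) : p ≠ 0 ∧ b ≠ 0 ∧ (a * p) ^ 2 ≠ c ^ 2 := by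
  obtain ⟨h₁, h₂, h₃, h₄⟩ := h
  have ha : a ≠ 0 := by
    rintro rfl
    have hc3 : 2 * c ^ 3 + 1 = 0 :=
      (mul_eq_zero.1 (by linear_combination -h₃ : (2 * c ^ 3 + 1) * l = 0)).resolve_right hl
    exact hl (pow_eq_zero_iff (n := 6) (by norm_num) |>.1 <| by
      linear_combination (1 / 9) * h₄ - ((32 * c ^ 3 - 8 * l ^ 6) / 9) * hc3)
  refine ⟨?_, ?_, fun hapc => hl6 ?_⟩
  · rintro rfl
    exact ha (by linear_combination (1 / 2) * h₁)
  · rintro rfl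
    have : 4 * a * c = 0 := by linear_combination -h₂
    simp_all
  · have hc3 : 8 * c ^ 3 + 1 = 0 :=
      (mul_eq_zero.1 (by linear_combination -h₃ - 6 * c * l * hapc + 6 * c * a ^ 2 * h₁ :
        l * (8 * c ^ 3 + 1) = 0)).resolve_left hl
    linear_combination (1 / 3) * h₄ + ((-8 * c ^ 3 + 2 * l ^ 6 - 3) / 3) * hc3

lemma eq_zero_of_block_products_eq_zero (hb : b ≠ 0) (hapc : (a * p) ^ 2 ≠ c ^ 2) {s t : ℂ}
    (h₁ : (s + t * a) * (-s + t * a) * (t * b) = 0)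
    (h₂ : (s * p + t * c) * (-s * p + t * c) * t = 0) : t = 0 := by
  by_contra ht
  have hs : s ^ 2 = (t * a) ^ 2 := by
    linear_combination -(mul_eq_zero.1 h₁).resolve_right (mul_ne_zero ht hb)
  have hsp : (s * p) ^ 2 = (t * c) ^ 2 := by
    linear_combination -(mul_eq_zero.1 h₂).resolve_right ht
  exact hapc (mul_left_cancel₀ (pow_ne_zero 2 ht) (by linear_combination hsp - p ^ 2 * hs))

lemma eq_one_of_smul_eq_mul (hp : p ≠ 0) {g x : Fin 6 → ℂ} {s : ℂ}
    (hg0 : g 0 = 1) (hg3 : g 3 ^ 9 = 1) (hg12 : g 1 * g 2 = g 3 ^ 3)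
    (hg345 : g 3 * g 4 * g 5 = 1)
    (hx₁ : x 0 + x 1 + x 2 = 0) (hx₁' : x 0 ^ 2 + x 1 ^ 2 + x 2 ^ 2 = 2)
    (hx₂ : x 3 + x 4 + x 5 = 0) (hx₂' : x 3 ^ 2 + x 4 ^ 2 + x 5 ^ 2 = 2 * p ^ 2)
    (h : ∀ i, s * ![1, -1, 0, p, -p, 0] i = g i * x i) (i : Fin 6) : g i = 1 := by
  have e0 : x 0 = s := by simpa [hg0] using (h 0).symm
  have e1 : -s = g 1 * x 1 := by simpa using h 1
  have e2 : g 2 * x 2 = 0 := by simpa using (h 2).symm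
  have e3 : s * p = g 3 * x 3 := by simpa using h 3
  have e4 : -(s * p) = g 4 * x 4 := by simpa using h 4
  have e5 : g 5 * x 5 = 0 := by simpa using (h 5).symm
  have hg3' : g 3 ≠ 0 := by rintro h0; simp [h0] at hg3
  have hx2 : x 2 = 0 := (mul_eq_zero.1 e2).resolve_left fun h0 =>
    hg3' (pow_eq_zero_iff three_ne_zero |>.1 (by rw [← hg12, h0, mul_zero]))
  have hx5 : x 5 = 0 := (mul_eq_zero.1 e5).resolve_left (right_ne_zero_of_mul_eq_one hg345)
  have hx1 : x 1 = -s := by linear_combination hx₁ - e0 - hx2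
  have hx4 : x 4 = -x 3 := by linear_combination hx₂ - hx5
  have hs : s ^ 2 = 1 := by
    rw [e0, hx1, hx2] at hx₁'
    linear_combination hx₁' / 2
  have hx3 : x 3 ^ 2 = p ^ 2 := by
    rw [hx4, hx5] at hx₂'
    linear_combination hx₂' / 2
  have hx3' : x 3 ≠ 0 := fun h0 =>
    hp (pow_eq_zero_iff two_ne_zero |>.1 (by rw [← hx3, h0]; ring))
  have hg1 : g 1 = 1 := by
    rw [hx1] at e1
    exact mul_right_cancel₀ (left_ne_zero_of_mul_eq_one (by linear_combination hs) : s ≠ 0)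
      (by linear_combination e1)
  have hg4 : g 4 = g 3 := by
    rw [hx4] at e4
    exact mul_right_cancel₀ hx3' (by linear_combination e4 + e3)
  have hg3sq : g 3 ^ 2 = 1 :=
    mul_right_cancel₀ (pow_ne_zero 2 hx3')
      (by linear_combination -(s * p + g 3 * x 3) * e3 + p ^ 2 * hs - hx3)
  -- `g 3` has order dividing both 2 and 9
  have hg3one : g 3 = 1 := by
    linear_combination hg3 - g 3 * (g 3 ^ 6 + g 3 ^ 4 + g 3 ^ 2 + 1) * hg3sq
  have hg2 : g 2 = 1 := by rw [hg1, hg3one] at hg12; linear_combination hg12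
  have hg4one : g 4 = 1 := hg4.trans hg3one
  have hg5 : g 5 = 1 := by rw [hg3one, hg4one] at hg345; linear_combination hg345
  fin_cases i <;> assumption

end Algebra

lemma eq_one_of_diagMap_permMap_mem_linePlane {z : ℂˣ} (hz : z ^ 9 = 1) {g : Fin 6 → ℂˣ}
    (hg : g ∈ Gsub z) {σ : Perm (Fin 6)} (hσ : σ ∈ Hsub) {a b c p : ℂ} (hp : p ≠ 0) (hb : b ≠ 0)
    (hapc : (a * p) ^ 2 ≠ c ^ 2)
    (h : diagMap g (permMap σ ![1, -1, 0, p, -p, 0]) ∈ linePlane a b c p) : g = 1 := by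
  obtain ⟨hg0, hg3, hg12, hg345⟩ := coe_relations_of_mem_Gsub hz hg
  have hσ' := Hsub_le_stabilizer_lowBlock hσ
  obtain ⟨s, t, hst⟩ := Submodule.mem_span_pair.1 h
  set u : Fin 6 → ℂ := ![1, -1, 0, p, -p, 0] with hu
  set v : Fin 6 → ℂ := ![a, a, b, c, c, 1] with hv
  have hw (i : Fin 6) : s * u i + t * v i = g i * u (σ i) := by
    have := congrFun hst i
    simp only [Pi.add_apply, Pi.smul_apply, smul_eq_mul, diagMap_apply, permMap_apply] at this
    exact this
  have prod₁ : u (σ 0) * u (σ 1) * u (σ 2) = 0 :=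
    (block_prod_comp_perm hσ' u).1.trans (by simp [hu])
  have prod₂ : u (σ 3) * u (σ 4) * u (σ 5) = 0 :=
    (block_prod_comp_perm hσ' u).2.trans (by simp [hu])
  have sum₁ : u (σ 0) + u (σ 1) + u (σ 2) = 0 := (block_sum_comp_perm hσ' u).1.trans (by simp [hu])
  have sum₂ : u (σ 3) + u (σ 4) + u (σ 5) = 0 := (block_sum_comp_perm hσ' u).2.trans (by simp [hu])
  have sq₁ : u (σ 0) ^ 2 + u (σ 1) ^ 2 + u (σ 2) ^ 2 = 2 :=
    (block_sum_comp_perm hσ' (u · ^ 2)).1.trans (by simp [hu]; norm_num)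
  have sq₂ : u (σ 3) ^ 2 + u (σ 4) ^ 2 + u (σ 5) ^ 2 = 2 * p ^ 2 :=
    (block_sum_comp_perm hσ' (u · ^ 2)).2.trans (by simp [hu]; ring)
  have ht : t = 0 := by
    refine eq_zero_of_block_products_eq_zero (s := s) hb hapc ?_ ?_
    · calc (s + t * a) * (-s + t * a) * (t * b)
          = (s * u 0 + t * v 0) * (s * u 1 + t * v 1) * (s * u 2 + t * v 2) := by
            simp [hu, hv]
        _ = (g 0 * g 1 * g 2) * (u (σ 0) * u (σ 1) * u (σ 2)) := by rw [hw, hw, hw]; ring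
        _ = 0 := by rw [prod₁, mul_zero]
    · calc (s * p + t * c) * (-s * p + t * c) * t
          = (s * u 3 + t * v 3) * (s * u 4 + t * v 4) * (s * u 5 + t * v 5) := by
            simp [hu, hv]
        _ = (g 3 * g 4 * g 5) * (u (σ 3) * u (σ 4) * u (σ 5)) := by rw [hw, hw, hw]; ring
        _ = 0 := by rw [prod₂, mul_zero]
  have hsu (i : Fin 6) : s * u i = g i * u (σ i) := by simpa [ht] using hw i
  funext i
  rw [Pi.one_apply, ← Units.val_eq_one]
  exact eq_one_of_smul_eq_mul (g := fun i => (g i : ℂ)) (x := fun i => u (σ i)) hp hg0 hg3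
    hg12 hg345 sum₁ sq₁ sum₂ sq₂ hsu i

theorem stmt_7 (z : ℂˣ) (hz : IsPrimitiveRoot (z : ℂ) 9) :
    ∃ S : Finset ℂ, (0 : ℂ) ∈ S ∧ ∀ l : ℂ, l ∉ S →
      ∀ a b c p : ℂ, c ≠ 0 → lineEqs l a b c p →
        ∀ g ∈ Gsub z, ∀ σ ∈ Hsub,
          Submodule.map (diagMap g) (Submodule.map (permMap σ) (linePlane a b c p)) =
              linePlane a b c p →
            Submodule.map (diagMap g) (linePlane a b c p) = linePlane a b c p ∧
            Submodule.map (permMap σ) (linePlane a b c p) = linePlane a b c p := by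
  refine ⟨insert 0 (Polynomial.nthRoots 6 (1 : ℂ)).toFinset, Finset.mem_insert_self _ _, ?_⟩
  intro l hl a b c p hc hle g hg σ hσ hmap
  obtain ⟨hl0, hl6⟩ : l ≠ 0 ∧ l ^ 6 ≠ 1 := by simpa [Polynomial.mem_nthRoots] using hl
  obtain ⟨hp, hb, hapc⟩ := lineEqs_nondegenerate hl0 hl6 hc hle
  have hmem : diagMap g (permMap σ ![1, -1, 0, p, -p, 0]) ∈ linePlane a b c p :=
    hmap ▸ Submodule.mem_map_of_mem
      (Submodule.mem_map_of_mem (Submodule.subset_span (Set.mem_insert _ _)))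
  obtain rfl := eq_one_of_diagMap_permMap_mem_linePlane
    (IsPrimitiveRoot.coe_units_iff.1 hz).pow_eq_one hg hσ hp hb hapc hmem
  rw [diagMap_one, Submodule.map_id] at hmap ⊢
  exact ⟨rfl, hmap⟩
end
end

section
/- There exists a finite set S ⊂ ℂ containing 0 such that for every λ ∉ S and every (a,b,c,p) ∈ ℂ⁴ with c ≠ 0 satisfying λp² = −2a, λ²b = 4ac, 12ca³ = (2c³+1)λ, and 64c⁶ − (16λ⁶ − 32)c³ + λ⁶ = 0, the following holds with W = W(a,b,c,p): there exists a ℂ-linear map β : W → ℂ⁶ whose image is not contained in W such that ∇F_λ(P)·β(P) = 0 and ∇G_λ(P)·β(P) = 0 for every P ∈ W. (Together with the nonexistence of such a constant vector, this expresses that the normal bundle of the line W on X_λ is O ⊕ O(−2) and the Zariski tangent space of the Hilbert scheme of lines at this line is positive dimensional.) -/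
noncomputable section

/-!
Write points of `W` as `s • u + t • v`. The candidate normal field is
`β (s • u + t • v) = s • k p (0, 0, b, c, c, 0) + t • (0, 0, 0, -1, 1, 0)`: substituting it, the
two directional derivatives become `3 s t² p E₁` and `3 s³ k p E₀ + 3 s t² p E₂` for three explicit
polynomials `E₀, E₁, E₂` in `λ, a, b, c, p, k`. The line equations make `E₀` vanish, and with
`k = 12 c / (4 c³ - 1)` also `E₁` and `E₂`; the denominator vanishes only when `λ⁶ = 4`. Since
`β v = (0, 0, 0, -1, 1, 0) ∉ W`, the image of `β` is not contained in `W`.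
-/

theorem fderiv_cubic_apply {𝕜 ι : Type*} [NontriviallyNormedField 𝕜] [Fintype ι]
    (l : 𝕜) (i j k m n o : ι) (x w : ι → 𝕜) :
    fderiv 𝕜 (fun y : ι → 𝕜 => y i ^ 3 + y j ^ 3 + y k ^ 3 - 3 * l * y m * y n * y o) x w =
      3 * x i ^ 2 * w i + 3 * x j ^ 2 * w j + 3 * x k ^ 2 * w k
        - 3 * l * (w m * x n * x o + x m * w n * x o + x m * x n * w o) := by
  have h (q : ι) := hasFDerivAt_apply (𝕜 := 𝕜) (F' := fun _ => 𝕜) q x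
  have H := (((h i).pow 3).fun_add ((h j).pow 3)).fun_add ((h k).pow 3) |>.fun_sub
    ((((h m).const_mul (3 * l)).fun_mul (h n)).fun_mul (h o))
  rw [H.fderiv]
  simp only [Nat.add_one_sub_one, nsmul_eq_mul, Nat.cast_ofNat, smul_add,
    sub_apply, add_apply, smul_apply, ContinuousLinearMap.proj_apply, smul_eq_mul]
  ring

theorem fderiv_Fcubic_apply (l : ℂ) (x w : Fin 6 → ℂ) :
    fderiv ℂ (Fcubic l) x w =
      3 * x 0 ^ 2 * w 0 + 3 * x 1 ^ 2 * w 1 + 3 * x 2 ^ 2 * w 2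
        - 3 * l * (w 3 * x 4 * x 5 + x 3 * w 4 * x 5 + x 3 * x 4 * w 5) :=
  fderiv_cubic_apply l 0 1 2 3 4 5 x w

theorem fderiv_Gcubic_apply (l : ℂ) (x w : Fin 6 → ℂ) :
    fderiv ℂ (Gcubic l) x w =
      3 * x 3 ^ 2 * w 3 + 3 * x 4 ^ 2 * w 4 + 3 * x 5 ^ 2 * w 5
        - 3 * l * (w 0 * x 1 * x 2 + x 0 * w 1 * x 2 + x 0 * x 1 * w 2) :=
  fderiv_cubic_apply l 3 4 5 0 1 2 x w

section NormalField

variable (l a b c p k s t : ℂ)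

theorem fderiv_Fcubic_normal :
    fderiv ℂ (Fcubic l) (s • ![1, -1, 0, p, -p, 0] + t • ![a, a, b, c, c, 1])
        (s • ![0, 0, k * p * b, k * p * c, k * p * c, 0] + t • ![0, 0, 0, -1, 1, 0]) =
      3 * s * t ^ 2 * p * (k * b ^ 3 - 2 * l * k * c ^ 2 - 2 * l) := by
  rw [fderiv_Fcubic_apply]
  simp only [Pi.add_apply, Pi.smul_apply, smul_eq_mul, Matrix.cons_val_zero, Matrix.cons_val_one,
    Matrix.cons_val]
  ring

theorem fderiv_Gcubic_normal :
    fderiv ℂ (Gcubic l) (s • ![1, -1, 0, p, -p, 0] + t • ![a, a, b, c, c, 1])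
        (s • ![0, 0, k * p * b, k * p * c, k * p * c, 0] + t • ![0, 0, 0, -1, 1, 0]) =
      3 * s ^ 3 * k * p * (l * b + 2 * c * p ^ 2)
        + 3 * s * t ^ 2 * p * (2 * k * c ^ 3 - l * k * a ^ 2 * b - 4 * c) := by
  rw [fderiv_Gcubic_apply]
  simp only [Pi.add_apply, Pi.smul_apply, smul_eq_mul, Matrix.cons_val_zero, Matrix.cons_val_one,
    Matrix.cons_val]
  ring

/-- Extension of `β` to `ℂ⁶`, through the coordinates `s = x₀ - a x₅`, `t = x₅` of `W`. -/
def normalMap : (Fin 6 → ℂ) →ₗ[ℂ] (Fin 6 → ℂ) :=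
  LinearMap.smulRight (LinearMap.proj 0 - a • LinearMap.proj 5)
      ![0, 0, k * p * b, k * p * c, k * p * c, 0]
    + LinearMap.smulRight (LinearMap.proj 5) ![0, 0, 0, -1, 1, 0]

theorem normalMap_apply :
    normalMap a b c p k (s • ![1, -1, 0, p, -p, 0] + t • ![a, a, b, c, c, 1]) =
      s • ![0, 0, k * p * b, k * p * c, k * p * c, 0] + t • ![0, 0, 0, -1, 1, 0] := by
  have hu : normalMap a b c p k ![1, -1, 0, p, -p, 0] =
      ![0, 0, k * p * b, k * p * c, k * p * c, 0] := by
    ext i; fin_cases i <;> simp [normalMap]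
  have hv : normalMap a b c p k ![a, a, b, c, c, 1] = ![0, 0, 0, -1, 1, 0] := by
    ext i; fin_cases i <;> simp [normalMap]
  rw [map_add, map_smul, map_smul, hu, hv]

theorem notMem_linePlane : ![0, 0, 0, -1, 1, 0] ∉ linePlane a b c p := by
  intro h
  obtain ⟨s, t, hst⟩ := Submodule.mem_span_pair.mp h
  have h0 := congrFun hst 0
  have h3 := congrFun hst 3
  have h5 := congrFun hst 5
  simp only [Pi.add_apply, Pi.smul_apply, smul_eq_mul, Matrix.cons_val_zero, Matrix.cons_val]
    at h0 h3 h5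
  have : (0 : ℂ) = -1 := by linear_combination h3 - p * h0 + (p * a - c) * h5
  norm_num at this

theorem range_normalMap_not_le :
    ¬ LinearMap.range ((normalMap a b c p k).comp (linePlane a b c p).subtype) ≤
      linePlane a b c p := by
  intro hle
  have hv : ![a, a, b, c, c, 1] ∈ linePlane a b c p :=
    Submodule.subset_span (Set.mem_insert_of_mem _ rfl)
  refine notMem_linePlane a b c p (hle ⟨⟨_, hv⟩, ?_⟩)
  simpa using normalMap_apply a b c p k 0 1

end NormalField

namespace lineEqs

variable {l a b c p : ℂ}

theorem four_mul_cube_sub_one_ne_zero (h : lineEqs l a b c p) (hl6 : l ^ 6 ≠ 4) :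
    4 * c ^ 3 - 1 ≠ 0 := by
  obtain ⟨-, -, -, h4⟩ := h
  intro hc
  apply hl6
  linear_combination (-1 / 3 : ℂ) * h4 + (16 / 3 * c ^ 3 + 4 - 4 / 3 * l ^ 6) * hc

theorem mul_b_add_eq_zero (h : lineEqs l a b c p) (hl : l ≠ 0) :
    l * b + 2 * c * p ^ 2 = 0 := by
  obtain ⟨h1, h2, -, -⟩ := h
  refine mul_left_cancel₀ hl ?_
  linear_combination h2 + 2 * c * h1

theorem mul_a_sq_mul_b (h : lineEqs l a b c p) (hl : l ≠ 0) (hc : c ≠ 0) :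
    3 * l * a ^ 2 * b = 2 * c ^ 3 + 1 := by
  obtain ⟨-, h2, h3, -⟩ := h
  refine mul_left_cancel₀ (mul_ne_zero hl hc) ?_
  linear_combination 3 * c * a ^ 2 * h2 + c * h3

theorem mul_b_cube (h : lineEqs l a b c p) (hl : l ≠ 0) :
    12 * c * b ^ 3 = 2 * l * (16 * c ^ 3 - 1) := by
  obtain ⟨-, h2, h3, h4⟩ := h
  refine mul_left_cancel₀ (pow_ne_zero 6 hl) ?_
  linear_combination 12 * c * (l ^ 4 * b ^ 2 + 4 * a * c * l ^ 2 * b + 16 * a ^ 2 * c ^ 2) * h2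
    + 64 * c ^ 3 * h3 + 2 * l * h4

theorem exists_normal_coeff (h : lineEqs l a b c p) (hl : l ≠ 0) (hl6 : l ^ 6 ≠ 4)
    (hc : c ≠ 0) :
    ∃ k, k * b ^ 3 - 2 * l * k * c ^ 2 - 2 * l = 0 ∧
      2 * k * c ^ 3 - l * k * a ^ 2 * b - 4 * c = 0 := by
  have hden := h.four_mul_cube_sub_one_ne_zero hl6
  set k := 12 * c / (4 * c ^ 3 - 1)
  have hk : k * (4 * c ^ 3 - 1) = 12 * c := div_mul_cancel₀ _ hden
  refine ⟨k, mul_right_cancel₀ hden ?_, mul_right_cancel₀ hden ?_⟩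
  · linear_combination (b ^ 3 - 2 * l * c ^ 2) * hk + h.mul_b_cube hl
  · linear_combination (2 * c ^ 3 - l * a ^ 2 * b) * hk - 4 * c * h.mul_a_sq_mul_b hl hc

end lineEqs

theorem stmt_11 :
    ∃ S : Finset ℂ, (0 : ℂ) ∈ S ∧ ∀ l : ℂ, l ∉ S →
      ∀ a b c p : ℂ, c ≠ 0 → lineEqs l a b c p →
        ∃ β : (linePlane a b c p) →ₗ[ℂ] (Fin 6 → ℂ),
          ¬ (LinearMap.range β ≤ linePlane a b c p) ∧
          ∀ P : linePlane a b c p,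
            fderiv ℂ (Fcubic l) (P : Fin 6 → ℂ) (β P) = 0 ∧
            fderiv ℂ (Gcubic l) (P : Fin 6 → ℂ) (β P) = 0 := by
  refine ⟨insert 0 (Polynomial.nthRootsFinset 6 (4 : ℂ)), Finset.mem_insert_self _ _, ?_⟩
  intro l hl a b c p hc h
  have hl0 : l ≠ 0 := by
    rintro rfl
    exact hl (Finset.mem_insert_self _ _)
  have hl6 : l ^ 6 ≠ 4 := fun h6 => hl <| Finset.mem_insert_of_mem <|
    (Polynomial.mem_nthRootsFinset (by norm_num) _).mpr h6
  obtain ⟨k, hE₁, hE₂⟩ := h.exists_normal_coeff hl0 hl6 hc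
  refine ⟨(normalMap a b c p k).comp (linePlane a b c p).subtype,
    range_normalMap_not_le a b c p k, ?_⟩
  rintro ⟨P, hP⟩
  obtain ⟨s, t, rfl⟩ := Submodule.mem_span_pair.mp hP
  simp only [LinearMap.comp_apply, Submodule.subtype_apply, normalMap_apply,
    fderiv_Fcubic_normal, fderiv_Gcubic_normal, hE₁, hE₂, h.mul_b_add_eq_zero hl0,
    mul_zero, add_zero, and_self]
end
end
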